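/- arXiv:1307.0333 — 2 statements merged into one kernel-verified Lean document; each statement's English description precedes it below -/
import Mathlib

section
/- Let X be a compact topological space on which a flow φ : ℝ × X → X acts continuously, let F ⊂ X be a finite set, and suppose x ∈ X is such that: (i) there is a strictly increasing sequence sₙ → ∞ with φ(sₙ, x) → p for some p ∈ F, and (ii) every subsequential limit of φ(s, x) as s → ∞ lies in F. Then φ(s, x) → p as s → ∞. -/
open Filter Topology

/-- on a compact metric space, if an orbit of a continuous flow has a
subsequential limit `p` in a finite set `F` and all its subsequential limits lie in `F`,
then the orbit converges to `p`. -/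
theorem stmt14 {X : Type*} [MetricSpace X] [CompactSpace X]
    (φ : ℝ → X → X) (hφ : Continuous fun q : ℝ × X => φ q.1 q.2)
    (F : Finset X) (x : X) (p : X) (hpF : p ∈ F)
    (s : ℕ → ℝ) (hsmono : StrictMono s) (hs : Filter.Tendsto s Filter.atTop Filter.atTop)
    (hconv : Filter.Tendsto (fun n => φ (s n) x) Filter.atTop (nhds p))
    (hsub : ∀ u : ℕ → ℝ, Filter.Tendsto u Filter.atTop Filter.atTop →
      ∀ q : X, Filter.Tendsto (fun n => φ (u n) x) Filter.atTop (nhds q) → q ∈ F) :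
    Filter.Tendsto (fun t : ℝ => φ t x) Filter.atTop (nhds p) := by
  classical
  -- the distance function along the orbit
  set g : ℝ → ℝ := fun t => dist (φ t x) p with hg
  have hgc : Continuous g := by
    apply Continuous.dist _ continuous_const
    exact hφ.comp (continuous_id.prodMk continuous_const)
  -- choose r > 0 isolating p inside F
  obtain ⟨r, hr, hrF⟩ : ∃ r > 0, ∀ q ∈ F, dist q p ≤ r → q = p := by
    by_cases hne : (F.erase p).Nonempty
    · refine ⟨(F.erase p).inf' hne (fun q => dist q p) / 2, ?_, ?_⟩
      · have : ∀ q ∈ F.erase p, 0 < dist q p := fun q hq =>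
          dist_pos.2 (Finset.ne_of_mem_erase hq)
        have h2 := (Finset.lt_inf'_iff hne).2 this
        linarith [h2]
      · intro q hq hd
        by_contra hqp
        have hq' : q ∈ F.erase p := Finset.mem_erase.2 ⟨hqp, hq⟩
        have h1 : (F.erase p).inf' hne (fun q => dist q p) ≤ dist q p :=
          Finset.inf'_le _ hq'
        have h2 : 0 < (F.erase p).inf' hne (fun q => dist q p) := by
          rw [Finset.lt_inf'_iff]
          exact fun q hq => dist_pos.2 (Finset.ne_of_mem_erase hq)
        linarith
    · refine ⟨1, one_pos, fun q hq _ => ?_⟩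
      by_contra hqp
      exact hne ⟨q, Finset.mem_erase.2 ⟨hqp, hq⟩⟩
  -- Step A: eventually g t ≤ r/2
  have hsmall : ∃ᶠ t in atTop, g t < r / 2 := by
    have : ∀ᶠ n in atTop, g (s n) < r / 2 := by
      have : Tendsto (fun n => g (s n)) atTop (𝓝 0) := by
        simpa [hg, dist_eq_zero] using
          (tendsto_iff_dist_tendsto_zero.1 hconv)
      exact this.eventually (eventually_lt_nhds (by linarith : (0:ℝ) < r / 2))
    exact hs.frequently this.frequently
  have hevsmall : ∀ᶠ t in atTop, g t ≤ r / 2 := by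
    by_contra hbig
    have hfreqbig : ∃ᶠ t in atTop, r / 2 < g t := by
      rw [Filter.not_eventually] at hbig
      exact hbig.mono fun t ht => lt_of_not_ge ht
    -- for every T there is t ≥ T with g t = r/2
    have key : ∀ T : ℝ, ∃ t ≥ T, g t = r / 2 := by
      intro T
      obtain ⟨t₁, ht₁T, ht₁⟩ := frequently_atTop.1 hsmall T
      obtain ⟨t₂, ht₂t₁, ht₂⟩ := frequently_atTop.1 hfreqbig t₁
      have : r / 2 ∈ Set.Icc (g t₁) (g t₂) := ⟨le_of_lt ht₁, le_of_lt ht₂⟩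
      obtain ⟨t, htmem, htval⟩ := intermediate_value_Icc ht₂t₁ hgc.continuousOn this
      exact ⟨t, le_trans ht₁T htmem.1, htval⟩
    choose u hu hval using fun n : ℕ => key n
    have hut : Tendsto u atTop atTop :=
      tendsto_atTop_mono hu tendsto_natCast_atTop_atTop
    obtain ⟨a, ψ, hψ, ha⟩ := CompactSpace.tendsto_subseq (fun n => φ (u n) x)
    have haF : a ∈ F := hsub (u ∘ ψ) (hut.comp hψ.tendsto_atTop) a ha
    have hda : dist a p = r / 2 := by
      have : Tendsto (fun n => dist (φ (u (ψ n)) x) p) atTop (𝓝 (dist a p)) :=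
        (continuous_dist.comp ((continuous_id.prodMk continuous_const))).continuousAt.tendsto.comp ha
      have heq : (fun n => dist (φ (u (ψ n)) x) p) = fun _ => r / 2 := by
        funext n; exact hval (ψ n)
      rw [heq] at this
      exact (tendsto_nhds_unique tendsto_const_nhds this).symm
    have : a = p := hrF a haF (by linarith [hda])
    rw [this, dist_self] at hda
    linarith
  -- Step B: conclude convergence via subsequences
  apply tendsto_of_subseq_tendsto
  intro ns hns
  obtain ⟨a, ψ, hψ, ha⟩ := CompactSpace.tendsto_subseq (fun n => φ (ns n) x)
  have haF : a ∈ F := hsub (ns ∘ ψ) (hns.comp hψ.tendsto_atTop) a ha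
  have hda : dist a p ≤ r / 2 := by
    have hev : ∀ᶠ n in atTop, dist (φ (ns (ψ n)) x) p ≤ r / 2 :=
      (hns.comp hψ.tendsto_atTop).eventually hevsmall
    have hlim : Tendsto (fun n => dist (φ (ns (ψ n)) x) p) atTop (𝓝 (dist a p)) :=
      (continuous_dist.comp ((continuous_id.prodMk continuous_const))).continuousAt.tendsto.comp ha
    exact le_of_tendsto hlim hev
  have : a = p := hrF a haF (by linarith)
  exact ⟨ψ, this ▸ ha⟩
end

section
/- Let N be a smooth G-manifold (G a compact Lie group) with a G-fixed point p, let ψ : U → B ⊂ E = T_pN be a G-equivariant chart around p with ψ(p) = 0, let φ : N → N be a G-equivariant diffeomorphism with global attractor p (every orbit {φⁿ(x)} eventually enters U and converges to p), and let h : E → E be a G-equivariant diffeomorphism agreeing with ψ∘φ∘ψ⁻¹ on a ball B_ε(0) and satisfying ‖h(ξ)‖ ≤ c‖ξ‖ with c < 1. Then the map Φ : N → E defined by Φ(x) := h^{−n}(ψ(φⁿ(x))) for any n with φⁿ(x) ∈ ψ⁻¹(B_ε(0)) is well-defined (independent of the choice of n) and is a G-equivariant bijection with inverse ξ ↦ φ^{−n}(ψ⁻¹(hⁿ(ξ))).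 -/
/-- linearization of a `G`-equivariant diffeomorphism with a global
attractor.  `ψ` is a `G`-equivariant chart around the fixed point (with local inverse
`σ` on the ball `B_ε(0)`), `φ` is a `G`-equivariant diffeomorphism whose orbits all
eventually enter `ψ⁻¹(B_ε(0))`, and `h : E ≃ E` is a `G`-equivariant diffeomorphism
agreeing with `ψ ∘ φ ∘ ψ⁻¹` on `B_ε(0)` and satisfying `‖h ξ‖ ≤ c ‖ξ‖` with `c < 1`.
Then `Φ(x) := h⁻ⁿ(ψ(φⁿ x))` is well defined (independent of `n`), `G`-equivariant and
bijective, with inverse `ξ ↦ φ⁻ⁿ(ψ⁻¹(hⁿ ξ))`. -/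
theorem stmt17 {N : Type*} {E : Type*} [NormedAddCommGroup E] [NormedSpace ℝ E]
    (G : Type*) [Group G] [MulAction G N] [DistribMulAction G E]
    (hiso : ∀ (g : G) (ξ : E), ‖g • ξ‖ = ‖ξ‖)
    (ε : ℝ) (hε : 0 < ε)
    (ψ : N → E) (σ : E → N)
    (hψG : ∀ (g : G) (x : N), ψ (g • x) = g • ψ x)
    (hσψ : ∀ x : N, ψ x ∈ Metric.ball (0 : E) ε → σ (ψ x) = x)
    (hψσ : ∀ ξ ∈ Metric.ball (0 : E) ε, ψ (σ ξ) = ξ)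
    (φ : N ≃ N) (hφG : ∀ (g : G) (x : N), φ (g • x) = g • φ x)
    (hattr : ∀ x : N, ∃ n : ℕ, ψ (φ^[n] x) ∈ Metric.ball (0 : E) ε)
    (h : E ≃ E) (hhG : ∀ (g : G) (ξ : E), h (g • ξ) = g • h ξ)
    (c : ℝ) (hc0 : 0 < c) (hc1 : c < 1) (hcontr : ∀ ξ : E, ‖h ξ‖ ≤ c * ‖ξ‖)
    (hconj : ∀ x : N, ψ x ∈ Metric.ball (0 : E) ε → h (ψ x) = ψ (φ x)) :
    ∃ Φ : N → E,
      -- well-definedness: `Φ x = h⁻ⁿ (ψ (φⁿ x))` for every admissible `n`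
      (∀ (x : N) (n : ℕ), ψ (φ^[n] x) ∈ Metric.ball (0 : E) ε →
        Φ x = h.symm^[n] (ψ (φ^[n] x))) ∧
      -- `G`-equivariance
      (∀ (g : G) (x : N), Φ (g • x) = g • Φ x) ∧
      -- bijectivity, with the explicit inverse `ξ ↦ φ⁻ⁿ (σ (hⁿ ξ))`
      Function.Bijective Φ ∧
      ∃ Φi : E → N,
        Function.LeftInverse Φi Φ ∧ Function.RightInverse Φi Φ ∧
        ∀ (ξ : E) (n : ℕ), h^[n] ξ ∈ Metric.ball (0 : E) ε →
          Φi ξ = φ.symm^[n] (σ (h^[n] ξ)) := by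
  classical
  -- iterate inverse identities
  have hsh : ∀ (n : ℕ) (ξ : E), h.symm^[n] (h^[n] ξ) = ξ := by
    intro n
    induction n with
    | zero => intro ξ; simp
    | succ n ih =>
      intro ξ
      rw [Function.iterate_succ_apply, Function.iterate_succ_apply',
        Equiv.symm_apply_apply, ih]
  have hhs : ∀ (n : ℕ) (ξ : E), h^[n] (h.symm^[n] ξ) = ξ := by
    intro n
    induction n with
    | zero => intro ξ; simp
    | succ n ih =>
      intro ξ
      rw [Function.iterate_succ_apply, Function.iterate_succ_apply',
        Equiv.apply_symm_apply, ih]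
  have hφs : ∀ (n : ℕ) (x : N), φ^[n] (φ.symm^[n] x) = x := by
    intro n
    induction n with
    | zero => intro x; simp
    | succ n ih =>
      intro x
      rw [Function.iterate_succ_apply, Function.iterate_succ_apply',
        Equiv.apply_symm_apply, ih]
  have hsφ : ∀ (n : ℕ) (x : N), φ.symm^[n] (φ^[n] x) = x := by
    intro n
    induction n with
    | zero => intro x; simp
    | succ n ih =>
      intro x
      rw [Function.iterate_succ_apply, Function.iterate_succ_apply',
        Equiv.symm_apply_apply, ih]
  -- equivariance of iterates
  have hφGit : ∀ (n : ℕ) (g : G) (x : N), φ^[n] (g • x) = g • φ^[n] x := by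
    intro n
    induction n with
    | zero => intro g x; simp
    | succ n ih =>
      intro g x
      rw [Function.iterate_succ_apply, hφG, ih, ← Function.iterate_succ_apply]
  have hhsG : ∀ (g : G) (ξ : E), h.symm (g • ξ) = g • h.symm ξ := by
    intro g ξ
    have := hhG g (h.symm ξ)
    rw [Equiv.apply_symm_apply] at this
    rw [← this, Equiv.symm_apply_apply]
  have hhsGit : ∀ (n : ℕ) (g : G) (ξ : E), h.symm^[n] (g • ξ) = g • h.symm^[n] ξ := by
    intro n
    induction n with
    | zero => intro g ξ; simp
    | succ n ih =>
      intro g ξ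
      rw [Function.iterate_succ_apply, hhsG, ih, ← Function.iterate_succ_apply]
  -- contraction of iterates
  have hnorm : ∀ (n : ℕ) (ξ : E), ‖h^[n] ξ‖ ≤ c ^ n * ‖ξ‖ := by
    intro n
    induction n with
    | zero => intro ξ; simp
    | succ n ih =>
      intro ξ
      rw [Function.iterate_succ_apply']
      calc ‖h (h^[n] ξ)‖ ≤ c * ‖h^[n] ξ‖ := hcontr _
        _ ≤ c * (c ^ n * ‖ξ‖) :=
          mul_le_mul_of_nonneg_left (ih ξ) hc0.le
        _ = c ^ (n + 1) * ‖ξ‖ := by ring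
  -- the forward step for Φ
  have step : ∀ (x : N) (n : ℕ), ψ (φ^[n] x) ∈ Metric.ball (0 : E) ε →
      ψ (φ^[n + 1] x) ∈ Metric.ball (0 : E) ε ∧
      h.symm^[n + 1] (ψ (φ^[n + 1] x)) = h.symm^[n] (ψ (φ^[n] x)) := by
    intro x n hn
    have hη : ‖ψ (φ^[n] x)‖ < ε := by
      simpa [mem_ball_zero_iff] using hn
    have heq : ψ (φ^[n + 1] x) = h (ψ (φ^[n] x)) := by
      rw [Function.iterate_succ_apply', ← hconj (φ^[n] x) hn]
    have hball : ψ (φ^[n + 1] x) ∈ Metric.ball (0 : E) ε := by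
      rw [mem_ball_zero_iff, heq]
      calc ‖h (ψ (φ^[n] x))‖ ≤ c * ‖ψ (φ^[n] x)‖ := hcontr _
        _ ≤ 1 * ‖ψ (φ^[n] x)‖ :=
          mul_le_mul_of_nonneg_right hc1.le (norm_nonneg _)
        _ < ε := by simpa using hη
    refine ⟨hball, ?_⟩
    rw [heq, Function.iterate_succ_apply, Equiv.symm_apply_apply]
  have stable : ∀ (x : N) (n k : ℕ), ψ (φ^[n] x) ∈ Metric.ball (0 : E) ε →
      ψ (φ^[n + k] x) ∈ Metric.ball (0 : E) ε ∧
      h.symm^[n + k] (ψ (φ^[n + k] x)) = h.symm^[n] (ψ (φ^[n] x)) := by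
    intro x n k hn
    induction k with
    | zero => exact ⟨hn, rfl⟩
    | succ k ih =>
      obtain ⟨hb, he⟩ := ih
      obtain ⟨hb', he'⟩ := step x (n + k) hb
      exact ⟨hb', by rw [show n + (k + 1) = n + k + 1 from rfl, he', he]⟩
  -- value independence
  have indep : ∀ (x : N) (n m : ℕ), ψ (φ^[n] x) ∈ Metric.ball (0 : E) ε →
      ψ (φ^[m] x) ∈ Metric.ball (0 : E) ε →
      h.symm^[n] (ψ (φ^[n] x)) = h.symm^[m] (ψ (φ^[m] x)) := by
    intro x n m hn hm
    rcases le_total n m with hle | hle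
    · obtain ⟨-, he⟩ := stable x n (m - n) hn
      rw [Nat.add_sub_cancel' hle] at he
      exact he.symm
    · obtain ⟨-, he⟩ := stable x m (n - m) hm
      rw [Nat.add_sub_cancel' hle] at he
      exact he
  -- define Φ
  set Φ : N → E := fun x =>
    h.symm^[Nat.find (hattr x)] (ψ (φ^[Nat.find (hattr x)] x)) with hΦdef
  have wd : ∀ (x : N) (n : ℕ), ψ (φ^[n] x) ∈ Metric.ball (0 : E) ε →
      Φ x = h.symm^[n] (ψ (φ^[n] x)) := by
    intro x n hn
    exact indep x (Nat.find (hattr x)) n (Nat.find_spec (hattr x)) hn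
  -- existence of admissible n for the inverse
  have hattr' : ∀ ξ : E, ∃ n : ℕ, h^[n] ξ ∈ Metric.ball (0 : E) ε := by
    intro ξ
    have hpos : (0 : ℝ) < ε / (‖ξ‖ + 1) := by positivity
    obtain ⟨n, hn⟩ := exists_pow_lt_of_lt_one hpos hc1
    refine ⟨n, ?_⟩
    rw [mem_ball_zero_iff]
    calc ‖h^[n] ξ‖ ≤ c ^ n * ‖ξ‖ := hnorm n ξ
      _ ≤ c ^ n * (‖ξ‖ + 1) := by
          have := pow_nonneg hc0.le n
          nlinarith [norm_nonneg ξ]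
      _ < ε / (‖ξ‖ + 1) * (‖ξ‖ + 1) := by
          have : (0 : ℝ) < ‖ξ‖ + 1 := by positivity
          exact mul_lt_mul_of_pos_right hn this
      _ = ε := by
          field_simp
  -- step for the inverse
  have stepi : ∀ (ξ : E) (n : ℕ), h^[n] ξ ∈ Metric.ball (0 : E) ε →
      h^[n + 1] ξ ∈ Metric.ball (0 : E) ε ∧
      φ.symm^[n + 1] (σ (h^[n + 1] ξ)) = φ.symm^[n] (σ (h^[n] ξ)) := by
    intro ξ n hn
    have hη : ‖h^[n] ξ‖ < ε := by simpa [mem_ball_zero_iff] using hn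
    have hψy : ψ (σ (h^[n] ξ)) = h^[n] ξ := hψσ _ hn
    have hψball : ψ (σ (h^[n] ξ)) ∈ Metric.ball (0 : E) ε := by
      rw [hψy]; exact hn
    have heq : h^[n + 1] ξ = ψ (φ (σ (h^[n] ξ))) := by
      rw [Function.iterate_succ_apply', ← hconj _ hψball, hψy]
    have hball : h^[n + 1] ξ ∈ Metric.ball (0 : E) ε := by
      rw [mem_ball_zero_iff, Function.iterate_succ_apply']
      calc ‖h (h^[n] ξ)‖ ≤ c * ‖h^[n] ξ‖ := hcontr _
        _ ≤ 1 * ‖h^[n] ξ‖ := mul_le_mul_of_nonneg_right hc1.le (norm_nonneg _)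
        _ < ε := by simpa using hη
    refine ⟨hball, ?_⟩
    have hballψ : ψ (φ (σ (h^[n] ξ))) ∈ Metric.ball (0 : E) ε := by
      rw [← heq]; exact hball
    rw [heq, hσψ _ hballψ, Function.iterate_succ_apply, Equiv.symm_apply_apply]
  have stablei : ∀ (ξ : E) (n k : ℕ), h^[n] ξ ∈ Metric.ball (0 : E) ε →
      h^[n + k] ξ ∈ Metric.ball (0 : E) ε ∧
      φ.symm^[n + k] (σ (h^[n + k] ξ)) = φ.symm^[n] (σ (h^[n] ξ)) := by
    intro ξ n k hn
    induction k with
    | zero => exact ⟨hn, rfl⟩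
    | succ k ih =>
      obtain ⟨hb, he⟩ := ih
      obtain ⟨hb', he'⟩ := stepi ξ (n + k) hb
      exact ⟨hb', by rw [show n + (k + 1) = n + k + 1 from rfl, he', he]⟩
  have indepi : ∀ (ξ : E) (n m : ℕ), h^[n] ξ ∈ Metric.ball (0 : E) ε →
      h^[m] ξ ∈ Metric.ball (0 : E) ε →
      φ.symm^[n] (σ (h^[n] ξ)) = φ.symm^[m] (σ (h^[m] ξ)) := by
    intro ξ n m hn hm
    rcases le_total n m with hle | hle
    · obtain ⟨-, he⟩ := stablei ξ n (m - n) hn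
      rw [Nat.add_sub_cancel' hle] at he
      exact he.symm
    · obtain ⟨-, he⟩ := stablei ξ m (n - m) hm
      rw [Nat.add_sub_cancel' hle] at he
      exact he
  set Φi : E → N := fun ξ =>
    φ.symm^[Nat.find (hattr' ξ)] (σ (h^[Nat.find (hattr' ξ)] ξ)) with hΦidef
  have wdi : ∀ (ξ : E) (n : ℕ), h^[n] ξ ∈ Metric.ball (0 : E) ε →
      Φi ξ = φ.symm^[n] (σ (h^[n] ξ)) := by
    intro ξ n hn
    exact indepi ξ (Nat.find (hattr' ξ)) n (Nat.find_spec (hattr' ξ)) hn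
  -- left inverse
  have hleft : Function.LeftInverse Φi Φ := by
    intro x
    obtain ⟨n, hn⟩ := hattr x
    have hΦx : Φ x = h.symm^[n] (ψ (φ^[n] x)) := wd x n hn
    have hiter : h^[n] (Φ x) = ψ (φ^[n] x) := by rw [hΦx, hhs]
    have hball : h^[n] (Φ x) ∈ Metric.ball (0 : E) ε := by rw [hiter]; exact hn
    rw [wdi (Φ x) n hball, hiter, hσψ _ hn, hsφ]
  -- right inverse
  have hright : Function.RightInverse Φi Φ := by
    intro ξ
    obtain ⟨n, hn⟩ := hattr' ξ
    have hΦiξ : Φi ξ = φ.symm^[n] (σ (h^[n] ξ)) := wdi ξ n hn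
    have hiter : φ^[n] (Φi ξ) = σ (h^[n] ξ) := by rw [hΦiξ, hφs]
    have hball : ψ (φ^[n] (Φi ξ)) ∈ Metric.ball (0 : E) ε := by
      rw [hiter, hψσ _ hn]; exact hn
    rw [wd (Φi ξ) n hball, hiter, hψσ _ hn, hsh]
  -- equivariance
  have hequiv : ∀ (g : G) (x : N), Φ (g • x) = g • Φ x := by
    intro g x
    obtain ⟨n, hn⟩ := hattr x
    have hgx : ψ (φ^[n] (g • x)) = g • ψ (φ^[n] x) := by
      rw [hφGit, hψG]
    have hball : ψ (φ^[n] (g • x)) ∈ Metric.ball (0 : E) ε := by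
      rw [mem_ball_zero_iff, hgx, hiso]
      simpa [mem_ball_zero_iff] using hn
    rw [wd (g • x) n hball, wd x n hn, hgx, hhsGit]
  exact ⟨Φ, wd, hequiv, ⟨hleft.injective, hright.surjective⟩, Φi, hleft, hright, wdi⟩
end
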